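/- For any real c and positive reals a, b, f, ∫₀^∞ ∫₀^{τ₃} ∫₀^{τ₂} (c/τ₃²) exp(-a τ₁) exp(-b τ₂) exp(-f τ₃) dτ₁ dτ₂ dτ₃ = (c/(ab(a+b))) · (a f log f − (a+b)(b+f) log(b+f) + b(a+b+f) log(a+b+f)). -/

import Mathlib

/-!
Write `g(τ) = ∑ αᵢ exp (-pᵢ τ)` with `∑ αᵢ = ∑ αᵢ pᵢ = 0`. Since `exp (-p τ) / τ²` is the Laplace
transform of the ramp `(s - p)⁺`, `g(τ) / τ²` is the Laplace transform of `w(s) = ∑ αᵢ (s - pᵢ)⁺`,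
and the two moment conditions make `w` vanish beyond `max pᵢ`. Hence Fubini applies, and with
`∫₀^∞ exp (-s τ) dτ = 1 / s` the integral of `g(τ) / τ²` becomes the elementary
`∫ w(s) / s ds = ∑ αᵢ pᵢ log pᵢ`. Integrating out `τ₁` and `τ₂` brings the triple integral to this
form with `α = (a, -(a + b), b)` and `p = (f, b + f, a + b + f)`.
-/

open Real Set MeasureTheory Filter Topology Finset

lemma integral_Ioo_exp_neg_mul {k : ℝ} (hk : k ≠ 0) {x : ℝ} (hx : 0 ≤ x) :
    ∫ t in Ioo 0 x, exp (-k * t) = (1 - exp (-k * x)) / k := by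
  rw [← integral_Ioc_eq_integral_Ioo, ← intervalIntegral.integral_of_le hx,
    intervalIntegral.integral_comp_mul_left (fun t => exp t) (neg_ne_zero.mpr hk), integral_exp]
  simp only [mul_zero, exp_zero, smul_eq_mul]
  field_simp
  ring

lemma integral_Ioo_integral_Ioo_exp_neg_mul_mul_exp_neg_mul {a b : ℝ} (ha : a ≠ 0) (hb : b ≠ 0)
    (hab : a + b ≠ 0) {x : ℝ} (hx : 0 ≤ x) :
    ∫ τ₂ in Ioo 0 x, ∫ τ₁ in Ioo 0 τ₂, exp (-a * τ₁) * exp (-b * τ₂)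
      = ((a + b) * (1 - exp (-b * x)) - b * (1 - exp (-(a + b) * x))) / (a * b * (a + b)) := by
  have hinner : ∀ τ₂ ∈ Ioo 0 x, ∫ τ₁ in Ioo 0 τ₂, exp (-a * τ₁) * exp (-b * τ₂)
      = (exp (-b * τ₂) - exp (-(a + b) * τ₂)) / a := fun τ₂ hτ₂ => by
    rw [integral_mul_const, integral_Ioo_exp_neg_mul ha hτ₂.1.le, neg_add, add_mul, exp_add]
    ring
  rw [setIntegral_congr_fun measurableSet_Ioo hinner, integral_div, ← integral_Ioc_eq_integral_Ioo,
    ← intervalIntegral.integral_of_le hx,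
    intervalIntegral.integral_sub (Continuous.intervalIntegrable (by fun_prop) _ _)
      (Continuous.intervalIntegrable (by fun_prop) _ _)]
  simp_rw [intervalIntegral.integral_of_le hx, integral_Ioc_eq_integral_Ioo,
    integral_Ioo_exp_neg_mul hb hx, integral_Ioo_exp_neg_mul hab hx]
  field_simp

lemma integral_Ioo_integral_Ioo_exp_mul_exp_mul_exp {a b : ℝ} (ha : a ≠ 0) (hb : b ≠ 0)
    (hab : a + b ≠ 0) (f : ℝ) {x : ℝ} (hx : 0 ≤ x) :
    ∫ τ₂ in Ioo 0 x, ∫ τ₁ in Ioo 0 τ₂, exp (-a * τ₁) * exp (-b * τ₂) * exp (-f * x)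
      = (a * exp (-f * x) - (a + b) * exp (-(b + f) * x) + b * exp (-(a + b + f) * x))
        / (a * b * (a + b)) := by
  have hbf : exp (-(b + f) * x) = exp (-b * x) * exp (-f * x) := by
    rw [← exp_add]; ring_nf
  have habf : exp (-(a + b + f) * x) = exp (-(a + b) * x) * exp (-f * x) := by
    rw [← exp_add]; ring_nf
  simp_rw [integral_mul_const (exp (-f * x)),
    integral_Ioo_integral_Ioo_exp_neg_mul_mul_exp_neg_mul ha hb hab hx,
    hbf, habf]
  field_simp
  ring

lemma integral_Ioi_exp_neg_mul {s : ℝ} (hs : 0 < s) : ∫ τ in Ioi 0, exp (-s * τ) = 1 / s := by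
  rw [integral_exp_mul_Ioi (neg_lt_zero.2 hs)]
  field_simp
  simp

lemma hasDerivAt_ramp_laplace_antideriv (p : ℝ) {τ : ℝ} (hτ : τ ≠ 0) (s : ℝ) :
    HasDerivAt (fun s => -((τ * (s - p) + 1) * exp (-s * τ)) / τ ^ 2)
      ((s - p) * exp (-s * τ)) s := by
  have hexp : HasDerivAt (fun s => exp (-s * τ)) (exp (-s * τ) * -τ) s := by
    simpa using ((hasDerivAt_neg s).mul_const τ).exp
  have hlin : HasDerivAt (fun s => τ * (s - p) + 1) τ s := by
    simpa using (((hasDerivAt_id s).sub_const p).const_mul τ).add_const 1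
  refine ((hlin.fun_mul hexp).fun_neg.div_const (τ ^ 2)).congr_deriv ?_
  field_simp
  ring

lemma tendsto_ramp_laplace_antideriv (p : ℝ) {τ : ℝ} (hτ : 0 < τ) :
    Tendsto (fun s => -((τ * (s - p) + 1) * exp (-s * τ)) / τ ^ 2) atTop (𝓝 0) := by
  have hu : Tendsto (fun s => s * τ) atTop atTop := tendsto_id.atTop_mul_const hτ
  have hlim : Tendsto (fun u => u * exp (-u) + (1 - p * τ) * exp (-u)) atTop (𝓝 0) := by
    simpa using (tendsto_pow_mul_exp_neg_atTop_nhds_zero 1).add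
      (tendsto_exp_neg_atTop_nhds_zero.const_mul (1 - p * τ))
  simpa using ((hlim.comp hu).neg.div_const (τ ^ 2)).congr fun s => by
    simp only [Function.comp_apply]
    ring

lemma integrableOn_Ioi_sub_mul_exp_neg_mul (p : ℝ) {τ : ℝ} (hτ : 0 < τ) :
    IntegrableOn (fun s => (s - p) * exp (-s * τ)) (Ioi p) :=
  integrableOn_Ioi_deriv_of_nonneg' (fun s _ => hasDerivAt_ramp_laplace_antideriv p hτ.ne' s)
    (fun _ hs => mul_nonneg (sub_nonneg.2 (le_of_lt hs)) (exp_pos _).le)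
    (tendsto_ramp_laplace_antideriv p hτ)

lemma integral_Ioi_sub_mul_exp_neg_mul (p : ℝ) {τ : ℝ} (hτ : 0 < τ) :
    ∫ s in Ioi p, (s - p) * exp (-s * τ) = exp (-p * τ) / τ ^ 2 := by
  rw [integral_Ioi_of_hasDerivAt_of_nonneg'
    (fun s _ => hasDerivAt_ramp_laplace_antideriv p hτ.ne' s)
    (fun _ hs => mul_nonneg (sub_nonneg.2 (le_of_lt hs)) (exp_pos _).le)
    (tendsto_ramp_laplace_antideriv p hτ)]
  ring

lemma integrable_indicator_Ioc_sub_mul_exp_neg_mul {q : ℝ} (hq : 0 < q) (R : ℝ) :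
    Integrable (fun z : ℝ × ℝ => (Ioc q R).indicator (fun s => s - q) z.2 * exp (-z.2 * z.1))
      ((volume.restrict (Ioi 0)).prod volume) := by
  have hbound : Integrable
      (fun z : ℝ × ℝ => exp (-q * z.1) * (Ioc q R).indicator (fun _ => R - q) z.2)
      ((volume.restrict (Ioi 0)).prod volume) :=
    Integrable.mul_prod (integrableOn_exp_mul_Ioi (neg_lt_zero.2 hq) 0)
      ((integrable_indicator_iff measurableSet_Ioc).2 (integrableOn_const measure_Ioc_lt_top.ne))
  have hmeas : Measurable
      (fun z : ℝ × ℝ => (Ioc q R).indicator (fun s => s - q) z.2 * exp (-z.2 * z.1)) := by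
    measurability
  refine hbound.mono' hmeas.aestronglyMeasurable ?_
  filter_upwards [Measure.quasiMeasurePreserving_fst.ae (ae_restrict_mem measurableSet_Ioi)]
    with ⟨τ, s⟩ (hτ : 0 < τ)
  by_cases hs : s ∈ Ioc q R
  · simp only [indicator_of_mem hs, norm_mul, Real.norm_eq_abs, abs_exp,
      abs_of_nonneg (sub_nonneg.2 hs.1.le)]
    rw [mul_comm]
    gcongr
    all_goals nlinarith [hs.1, hs.2]
  · simp [indicator_of_notMem hs]

lemma integrableOn_Ioc_sub_div {q : ℝ} (hq : 0 < q) (R : ℝ) :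
    IntegrableOn (fun s => (s - q) / s) (Ioc q R) :=
  (ContinuousOn.integrableOn_Icc (by fun_prop (disch := intro s hs; linarith [hs.1]))).mono_set
    Ioc_subset_Icc_self

lemma integral_Ioc_sub_div {q R : ℝ} (hq : 0 < q) (hqR : q ≤ R) :
    ∫ s in Ioc q R, (s - q) / s = R - q - q * log (R / q) := by
  have hpos : ∀ s ∈ uIcc q R, 0 < s := fun s hs =>
    hq.trans_le (by rw [uIcc_of_le hqR] at hs; exact hs.1)
  rw [← intervalIntegral.integral_of_le hqR,
    intervalIntegral.integral_congr (g := fun s => 1 - q * s⁻¹) fun s hs => by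
      field_simp [(hpos s hs).ne'],
    intervalIntegral.integral_sub intervalIntegrable_const
      ((intervalIntegral.intervalIntegrable_inv (fun s hs => (hpos s hs).ne')
        continuousOn_id).const_mul q),
    intervalIntegral.integral_const_mul, integral_inv_of_pos hq (hq.trans_le hqR)]
  simp

section RampSum

variable {ι : Type*} {t : Finset ι} {α p : ι → ℝ} {R : ℝ}

variable (t α p R) in
/-- The cut-off at `R` makes `rampSum * exp` integrable on the product (each ramp alone is not);
under the moment conditions it does not change the function (`rampSum_eq_sum_indicator_Ioi`). -/
noncomputable def rampSum (s : ℝ) : ℝ :=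
  ∑ i ∈ t, α i * (Ioc (p i) R).indicator (fun s => s - p i) s

lemma rampSum_eq_sum_indicator_Ioi (hR : ∀ i ∈ t, p i ≤ R) (h₀ : ∑ i ∈ t, α i = 0)
    (h₁ : ∑ i ∈ t, α i * p i = 0) (s : ℝ) :
    rampSum t α p R s = ∑ i ∈ t, α i * (Ioi (p i)).indicator (fun s => s - p i) s := by
  rcases le_or_gt s R with hsR | hRs
  · refine sum_congr rfl fun i _ => ?_
    by_cases hs : p i < s <;> simp [hs, hsR]
  · have hterm : ∀ i ∈ t,
        α i * (Ioi (p i)).indicator (fun s => s - p i) s = s * α i - α i * p i := fun i hi => by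
      rw [indicator_of_mem (show s ∈ Ioi (p i) from (hR i hi).trans_lt hRs)]
      ring
    rw [sum_congr rfl hterm, sum_sub_distrib, ← mul_sum, h₀, h₁]
    simp [rampSum, hRs.not_ge]

lemma rampSum_eq_zero_of_nonpos (hp : ∀ i ∈ t, 0 < p i) {s : ℝ} (hs : s ≤ 0) :
    rampSum t α p R s = 0 :=
  sum_eq_zero fun i hi => by
    simp [indicator_of_notMem fun h : s ∈ Ioc (p i) R => by linarith [hp i hi, h.1]]

lemma integral_rampSum_mul_exp_neg_mul (hR : ∀ i ∈ t, p i ≤ R) (h₀ : ∑ i ∈ t, α i = 0)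
    (h₁ : ∑ i ∈ t, α i * p i = 0) {τ : ℝ} (hτ : 0 < τ) :
    ∫ s, rampSum t α p R s * exp (-s * τ) = (∑ i ∈ t, α i * exp (-p i * τ)) / τ ^ 2 := by
  have hterm : ∀ i s, α i * (Ioi (p i)).indicator (fun s => s - p i) s * exp (-s * τ)
      = (Ioi (p i)).indicator (fun s => α i * ((s - p i) * exp (-s * τ))) s := fun i s => by
    by_cases hs : s ∈ Ioi (p i)
    · simp only [indicator_of_mem hs]; ring
    · simp [indicator_of_notMem hs]
  simp_rw [rampSum_eq_sum_indicator_Ioi hR h₀ h₁, sum_mul, hterm]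
  rw [integral_finsetSum _ fun i _ => IntegrableOn.integrable_indicator
    ((integrableOn_Ioi_sub_mul_exp_neg_mul (p i) hτ).const_mul (α i)) measurableSet_Ioi]
  simp_rw [integral_indicator measurableSet_Ioi, integral_const_mul,
    integral_Ioi_sub_mul_exp_neg_mul _ hτ, sum_div, mul_div_assoc]

lemma integrable_rampSum_mul_exp_neg_mul (hp : ∀ i ∈ t, 0 < p i) :
    Integrable (fun z : ℝ × ℝ => rampSum t α p R z.2 * exp (-z.2 * z.1))
      ((volume.restrict (Ioi 0)).prod volume) := by
  simp_rw [rampSum, sum_mul, mul_assoc]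
  exact integrable_finsetSum _ fun i hi =>
    (integrable_indicator_Ioc_sub_mul_exp_neg_mul (hp i hi) R).const_mul (α i)

lemma integral_rampSum_div (hp : ∀ i ∈ t, 0 < p i) (hR : ∀ i ∈ t, p i ≤ R) :
    ∫ s, rampSum t α p R s / s = ∑ i ∈ t, α i * (R - p i - p i * log (R / p i)) := by
  have hterm : ∀ i s, α i * (Ioc (p i) R).indicator (fun s => s - p i) s / s
      = (Ioc (p i) R).indicator (fun s => α i * ((s - p i) / s)) s := fun i s => by
    by_cases hs : s ∈ Ioc (p i) R
    · simp only [indicator_of_mem hs]; ring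
    · simp [indicator_of_notMem hs]
  simp_rw [rampSum, sum_div, hterm]
  rw [integral_finsetSum _ fun i hi => IntegrableOn.integrable_indicator
    ((integrableOn_Ioc_sub_div (hp i hi) R).const_mul (α i)) measurableSet_Ioc]
  refine sum_congr rfl fun i hi => ?_
  rw [integral_indicator measurableSet_Ioc, integral_const_mul,
    integral_Ioc_sub_div (hp i hi) (hR i hi)]

end RampSum

theorem integral_Ioi_sum_mul_exp_neg_mul_div_sq {ι : Type*} (t : Finset ι) (α p : ι → ℝ)
    (hp : ∀ i ∈ t, 0 < p i) (h₀ : ∑ i ∈ t, α i = 0) (h₁ : ∑ i ∈ t, α i * p i = 0) :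
    ∫ τ in Ioi 0, (∑ i ∈ t, α i * exp (-p i * τ)) / τ ^ 2 = ∑ i ∈ t, α i * p i * log (p i) := by
  set R := ∑ i ∈ t, p i
  have hR : ∀ i ∈ t, p i ≤ R := fun i hi => single_le_sum (fun j hj => (hp j hj).le) hi
  have hinner : ∀ s, ∫ τ in Ioi 0, rampSum t α p R s * exp (-s * τ) = rampSum t α p R s / s := by
    intro s
    rcases le_or_gt s 0 with hs | hs
    · simp [rampSum_eq_zero_of_nonpos hp hs]
    · rw [integral_const_mul, integral_Ioi_exp_neg_mul hs, mul_one_div]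
  have hlog : ∀ i ∈ t, α i * (R - p i - p i * log (R / p i))
      = R * α i - (1 + log R) * (α i * p i) + α i * p i * log (p i) := fun i hi => by
    rw [log_div ((hp i hi).trans_le (hR i hi)).ne' (hp i hi).ne']
    ring
  calc ∫ τ in Ioi 0, (∑ i ∈ t, α i * exp (-p i * τ)) / τ ^ 2
      = ∫ τ in Ioi 0, ∫ s, rampSum t α p R s * exp (-s * τ) :=
        setIntegral_congr_fun measurableSet_Ioi fun τ hτ =>
          (integral_rampSum_mul_exp_neg_mul hR h₀ h₁ hτ).symm
    _ = ∫ s, ∫ τ in Ioi 0, rampSum t α p R s * exp (-s * τ) :=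
        integral_integral_swap (integrable_rampSum_mul_exp_neg_mul hp)
    _ = ∫ s, rampSum t α p R s / s := by simp_rw [hinner]
    _ = ∑ i ∈ t, α i * (R - p i - p i * log (R / p i)) := integral_rampSum_div hp hR
    _ = ∑ i ∈ t, α i * p i * log (p i) := by
        rw [sum_congr rfl hlog, sum_add_distrib, sum_sub_distrib, ← mul_sum, ← mul_sum, h₀, h₁]
        ring

theorem stmt_8 (c a b f : ℝ) (ha : 0 < a) (hb : 0 < b) (hf : 0 < f) :
    ∫ τ₃ in Set.Ioi (0:ℝ), ∫ τ₂ in Set.Ioo 0 τ₃, ∫ τ₁ in Set.Ioo 0 τ₂,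
      (c / τ₃^2) * Real.exp (-a * τ₁) * Real.exp (-b * τ₂) * Real.exp (-f * τ₃)
      = (c / (a * b * (a + b))) *
        (a * f * Real.log f - (a + b) * (b + f) * Real.log (b + f)
          + b * (a + b + f) * Real.log (a + b + f)) := by
  set α : Fin 3 → ℝ := ![a, -(a + b), b]
  set p : Fin 3 → ℝ := ![f, b + f, a + b + f]
  have hinner : ∀ τ₃ ∈ Ioi (0:ℝ), ∫ τ₂ in Ioo 0 τ₃, ∫ τ₁ in Ioo 0 τ₂,
      (c / τ₃^2) * exp (-a * τ₁) * exp (-b * τ₂) * exp (-f * τ₃)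
        = c / (a * b * (a + b)) * ((∑ i, α i * exp (-p i * τ₃)) / τ₃ ^ 2) := fun τ₃ hτ₃ => by
    simp_rw [mul_assoc (c / τ₃ ^ 2), integral_const_mul,
      integral_Ioo_integral_Ioo_exp_mul_exp_mul_exp ha.ne' hb.ne' (by positivity) f hτ₃.le]
    simp only [Fin.sum_univ_three, α, p, Matrix.cons_val]
    ring
  rw [setIntegral_congr_fun measurableSet_Ioi hinner, integral_const_mul,
    integral_Ioi_sum_mul_exp_neg_mul_div_sq]
  · simp only [Fin.sum_univ_three, α, p, Matrix.cons_val]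
    ring
  · intro i _
    fin_cases i <;>
      simp only [Fin.zero_eta, Fin.mk_one, Fin.reduceFinMk, Fin.isValue, Matrix.cons_val_zero,
        Matrix.cons_val_one, Matrix.cons_val, p] <;> positivity
  · simp only [Fin.sum_univ_three, α, Matrix.cons_val]
    ring
  · simp only [Fin.sum_univ_three, α, p, Matrix.cons_val]
    ring
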